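/- Let G be a finite group with symmetric generating set A not containing the identity, and let A = A₁ ⊔ A₂ be a partition into symmetric subsets. Color edge {x, sx} blue if s ∈ A₁ and red if s ∈ A₂. If ⟨A₁⟩ ∩ A₂ = ∅ and A₁ ∩ ⟨A₂⟩ = ∅, then no cycle in C(G,A) has exactly one blue edge, and no cycle has exactly one red edge. -/
import Mathlib


open scoped Classical

/-- The Cayley graph of a group `G` with respect to a set `A`:
`x` is adjacent to `y` iff `y * x⁻¹ ∈ A` (for symmetric `A` not containing
the identity, `fromRel` of this relation is exactly that graph). -/
def cayleyGraph {G : Type*} [Group G] (A : Set G) : SimpleGraph G :=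
  SimpleGraph.fromRel (fun x y => y * x⁻¹ ∈ A)

private lemma cayley_darts_mem {G : Type*} [Group G] (A : Set G)
    (hsym : ∀ s ∈ A, s⁻¹ ∈ A) {x y : G} (p : (cayleyGraph A).Walk x y)
    {d : (cayleyGraph A).Dart} (hd : d ∈ p.darts) : d.snd * d.fst⁻¹ ∈ A := by
  have h := d.adj
  simp only [cayleyGraph, SimpleGraph.fromRel_adj] at h
  rcases h.2 with h | h
  · exact h
  · have := hsym _ h
    simpa [mul_inv_rev] using this

private lemma cayley_prod_darts {G : Type*} [Group G] (A : Set G)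
    {x y : G} (p : (cayleyGraph A).Walk x y) :
    ((p.darts.map (fun d => d.snd * d.fst⁻¹)).reverse).prod = y * x⁻¹ := by
  induction p with
  | nil => simp
  | cons h p ih =>
    simp only [SimpleGraph.Walk.darts_cons, List.map_cons, List.reverse_cons,
      List.prod_append, List.prod_cons, List.prod_nil, ih]
    group

private lemma aux_one {G : Type*} [Group G] (B C : Set G) (l : List G)
    (hmem : ∀ s ∈ l, s ∈ B ∪ C)
    (hf : (l.filter (fun s => decide (s ∈ B))).length = 1)
    (hprod : l.prod = 1) : ∃ s ∈ B, s ∈ Subgroup.closure C := by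
  obtain ⟨s, hs⟩ := List.length_eq_one_iff.mp hf
  rw [List.filter_eq_cons_iff] at hs
  obtain ⟨l₁, l₂, hl, hl₁, hsB, hl₂⟩ := hs
  have hsB : s ∈ B := by simpa using hsB
  have hC : ∀ t ∈ l, ¬ (t ∈ B) → t ∈ C := by
    intro t ht htB
    rcases hmem t ht with h | h
    · exact absurd h htB
    · exact h
  have h1 : l₁.prod ∈ Subgroup.closure C := by
    apply Subgroup.list_prod_mem
    intro t ht
    apply Subgroup.subset_closure
    apply hC t (hl ▸ List.mem_append_left _ ht)
    intro hB
    have := hl₁ t ht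
    simp [hB] at this
  have h2 : l₂.prod ∈ Subgroup.closure C := by
    apply Subgroup.list_prod_mem
    intro t ht
    apply Subgroup.subset_closure
    apply hC t (hl ▸ List.mem_append_right _ (List.mem_cons_of_mem _ ht))
    intro hB
    have : t ∈ l₂.filter (fun s => decide (s ∈ B)) := by
      simp [List.mem_filter, ht, hB]
    rw [hl₂] at this
    simp at this
  refine ⟨s, hsB, ?_⟩
  have : l₁.prod * s * l₂.prod = 1 := by
    rw [← hprod, hl]; simp [List.prod_append, mul_assoc]
  have hs' : s = l₁.prod⁻¹ * l₂.prod⁻¹ := by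
    calc s = l₁.prod⁻¹ * (l₁.prod * s * l₂.prod) * l₂.prod⁻¹ := by group
    _ = l₁.prod⁻¹ * 1 * l₂.prod⁻¹ := by rw [this]
    _ = l₁.prod⁻¹ * l₂.prod⁻¹ := by group
  rw [hs']
  exact mul_mem (inv_mem h1) (inv_mem h2)

/-- If `A = A₁ ⊔ A₂` is a partition of a symmetric generating set (without the
identity) into symmetric parts with `⟨A₁⟩ ∩ A₂ = ∅` and `A₁ ∩ ⟨A₂⟩ = ∅`, then no
cycle of the Cayley graph `C(G,A)` has exactly one blue edge (edge labelled by
`A₁`) and no cycle has exactly one red edge (edge labelled by `A₂`). -/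
theorem cayley_cycle_not_exactly_one_color {G : Type*} [Group G] [Fintype G]
    (A A₁ A₂ : Set G)
    (hsym : ∀ s ∈ A, s⁻¹ ∈ A) (hid : (1 : G) ∉ A)
    (hgen : Subgroup.closure A = ⊤)
    (hpart : A = A₁ ∪ A₂) (hdisj : Disjoint A₁ A₂)
    (hsym₁ : ∀ s ∈ A₁, s⁻¹ ∈ A₁) (hsym₂ : ∀ s ∈ A₂, s⁻¹ ∈ A₂)
    (h₁ : (Subgroup.closure A₁ : Set G) ∩ A₂ = ∅)
    (h₂ : A₁ ∩ (Subgroup.closure A₂ : Set G) = ∅) :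
    ∀ (x : G) (c : (cayleyGraph A).Walk x x), c.IsCycle →
      (c.darts.filter (fun d => decide (d.snd * d.fst⁻¹ ∈ A₁))).length ≠ 1 ∧
      (c.darts.filter (fun d => decide (d.snd * d.fst⁻¹ ∈ A₂))).length ≠ 1 := by
  intro x c _
  set f : (cayleyGraph A).Dart → G := fun d => d.snd * d.fst⁻¹ with hf
  set l : List G := (c.darts.map f).reverse with hldef
  have hmem : ∀ s ∈ l, s ∈ A₁ ∪ A₂ := by
    intro s hs
    rw [hldef, List.mem_reverse, List.mem_map] at hs
    obtain ⟨d, hd, rfl⟩ := hs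
    rw [← hpart]
    exact cayley_darts_mem A hsym c hd
  have hprod : l.prod = 1 := by
    rw [hldef, cayley_prod_darts]; group
  have hlen : ∀ (B : Set G),
      (l.filter (fun s => decide (s ∈ B))).length =
      (c.darts.filter (fun d => decide (d.snd * d.fst⁻¹ ∈ B))).length := by
    intro B
    rw [hldef, List.filter_reverse, List.length_reverse, List.filter_map,
      List.length_map]
    rfl
  constructor
  · intro hone
    rw [← hlen A₁] at hone
    obtain ⟨s, hsB, hsC⟩ := aux_one A₁ A₂ l hmem hone hprod
    have : s ∈ A₁ ∩ (Subgroup.closure A₂ : Set G) := ⟨hsB, hsC⟩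
    rw [h₂] at this
    exact this
  · intro hone
    rw [← hlen A₂] at hone
    have hmem' : ∀ s ∈ l, s ∈ A₂ ∪ A₁ := fun s hs => (Set.union_comm A₁ A₂ ▸ hmem s hs)
    obtain ⟨s, hsB, hsC⟩ := aux_one A₂ A₁ l hmem' hone hprod
    have : s ∈ (Subgroup.closure A₁ : Set G) ∩ A₂ := ⟨hsC, hsB⟩
    rw [h₁] at this
    exact this
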